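/- arXiv:1112.5071 — 7 statements merged into one kernel-verified Lean document; each statement's English description precedes it below -/
import Mathlib

section
/- Let A be a combinatorial class with no structures of size 0 (a_0 = 0), and let Seq(A) be the class of all finite sequences (lists) of A-structures, with size of a sequence defined as the sum of the sizes of its components. If 0 < x is such that A(x) = ∑_n a_n x^n converges with A(x) < 1, then the family (x^{|w|})_{w ∈ Seq(A)} indexed by all finite lists w of elements of A is summable, with sum equal to 1/(1 − A(x)). -/
/-!
Cutting a list into its length `n` and its entries, the weight `∏ᵢ x ^ |wᵢ|` of the lists of
length `n` sums to `A(x) ^ n`, since the sum over `n`-tuples factors into `n` copies of `A(x)`.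
Summing the geometric series over `n` gives `1 / (1 - A(x))`; all terms are nonnegative, so
these rearrangements are legitimate.
-/

open Finset

theorem HasSum.sigma_of_nonneg {ι : Type*} {β : ι → Type*} {F : (Σ i, β i) → ℝ} (hF : 0 ≤ F)
    {g : ι → ℝ} (hg : ∀ i, HasSum (fun b => F ⟨i, b⟩) (g i)) {s : ℝ} (hs : HasSum g s) :
    HasSum F s := by
  have hFsum : Summable F := (summable_sigma_of_nonneg hF).2
    ⟨fun i => (hg i).summable, by simpa only [(hg _).tsum_eq] using hs.summable⟩
  exact (hFsum.hasSum.sigma hg).unique hs ▸ hFsum.hasSum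

section

variable {A : Type*} {f : A → ℝ} {a : ℝ}

theorem hasSum_prod_fin_tuple (hf : 0 ≤ f) (ha : HasSum f a) (n : ℕ) :
    HasSum (fun g : Fin n → A => ∏ i, f (g i)) (a ^ n) := by
  induction n with
  | zero =>
    simp only [univ_eq_empty, prod_empty, pow_zero]
    exact hasSum_single default fun g hg => (hg (Subsingleton.elim _ _)).elim
  | succ n ih =>
    have hnonneg : 0 ≤ fun g : Fin n → A => ∏ i, f (g i) := fun g => prod_nonneg fun i _ => hf _
    have hsummable := ha.summable.mul_of_nonneg ih.summable hf hnonneg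
    have hprod := ha.mul ih hsummable
    have hcons : (fun g : Fin (n + 1) → A => ∏ i, f (g i)) ∘ Fin.consEquiv (fun _ => A) =
        fun p => f p.1 * ∏ i, f (p.2 i) := by
      funext p
      simp [Fin.prod_univ_succ]
    rwa [pow_succ', ← (Fin.consEquiv fun _ => A).hasSum_iff, hcons]

theorem hasSum_list_prod_map (hf : 0 ≤ f) (ha : HasSum f a) (ha1 : a < 1) :
    HasSum (fun w : List A => (w.map f).prod) (1 - a)⁻¹ := by
  rw [← List.equivSigmaTuple.symm.hasSum_iff]
  refine HasSum.sigma_of_nonneg (g := (a ^ ·)) (fun p => ?_) (fun n => ?_)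
    (hasSum_geometric_of_lt_one (ha.nonneg hf) ha1)
  · simpa [List.map_ofFn, List.prod_ofFn] using prod_nonneg fun i _ => hf (p.2 i)
  · simpa [List.map_ofFn, List.prod_ofFn] using hasSum_prod_fin_tuple hf ha n

end

theorem sequence_class_boltzmann_summable_general
    (A : Type*) (sa : A → ℕ)
    (x : ℝ) (hx : 0 < x)
    (Ax : ℝ) (hAx : HasSum (fun α : A => x ^ sa α) Ax) (hAx1 : Ax < 1) :
    HasSum (fun w : List A => x ^ (w.map sa).sum) (1 / (1 - Ax)) := by
  have hweight (w : List A) : x ^ (w.map sa).sum = (w.map fun α => x ^ sa α).prod := by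
    induction w with
    | nil => simp
    | cons α w ih => simp [pow_add, ih]
  simpa only [one_div, hweight] using
    hasSum_list_prod_map (fun α => pow_nonneg hx.le (sa α)) hAx hAx1

/-- If `A` has no structures of size `0` and `0 < x` is such that
`A(x) = ∑ a n * x ^ n` converges with `A(x) < 1`, then the family
`(x ^ |w|)_{w ∈ Seq(A)}` indexed by all finite lists `w` over `A` (with size of a
list being the sum of component sizes) is summable with sum `1 / (1 - A(x))`. -/
theorem sequence_class_boltzmann_summable
    (A : Type*) [Countable A] (sa : A → ℕ)
    (hfa : ∀ n : ℕ, {α : A | sa α = n}.Finite)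
    (h0 : ∀ α : A, sa α ≠ 0)
    (x : ℝ) (hx : 0 < x)
    (Ax : ℝ) (hAx : HasSum (fun α : A => x ^ sa α) Ax) (hAx1 : Ax < 1) :
    HasSum (fun w : List A => x ^ (w.map sa).sum) (1 / (1 - Ax)) :=
  sequence_class_boltzmann_summable_general A sa x hx Ax hAx hAx1
end

section
/- Let A be a combinatorial class with a_0 = 0, and let MSet(A) be the class of all finite multisets of A-structures, with size of a multiset equal to the sum (with multiplicity) of the sizes of its elements. Let 0 < x < 1 be such that the series ∑_{k≥1} A(x^k)/k converges, where A(t) = ∑_n a_n t^n. Then the family (x^{|m|})_{m ∈ MSet(A)} indexed by all finite multisets m over A is summable, with sum equal to exp(∑_{k≥1} A(x^k)/k). -/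
/-!
Identifying a multiset with its multiplicity function, `∑_m x^|m|` is formally the Euler product
`∏_α (1 - x^|α|)⁻¹`. Over a finite set of structures this is a finite product of geometric
series; as all terms are nonnegative, the full sum is the supremum of these finite products,
namely `exp (∑_α -log (1 - x^|α|))`. Expanding the logarithm and exchanging the two summations,
again legitimate by nonnegativity, turns the exponent into `∑_k A(x^k)/k`.
-/

open Real

section NonnegSeries

variable {α : Type*}

theorem HasSum.sigma_of_nonneg_s9 {β : α → Type*} {F : (Σ a, β a) → ℝ} (hF : 0 ≤ F) {u : α → ℝ}
    {s : ℝ} (hrow : ∀ a, HasSum (fun b => F ⟨a, b⟩) (u a)) (hu : HasSum u s) : HasSum F s := by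
  have hF_summable : Summable F := (summable_sigma_of_nonneg hF).mpr
    ⟨fun a => (hrow a).summable, hu.summable.congr fun a => ((hrow a).tsum_eq).symm⟩
  convert hF_summable.hasSum
  rw [hF_summable.tsum_sigma' fun a => (hrow a).summable, tsum_congr fun a => (hrow a).tsum_eq,
    hu.tsum_eq]

theorem HasSum.prod_of_nonneg {β : Type*} {F : α × β → ℝ} (hF : 0 ≤ F) {u : α → ℝ} {s : ℝ}
    (hrow : ∀ a, HasSum (fun b => F (a, b)) (u a)) (hu : HasSum u s) : HasSum F s :=
  (Equiv.sigmaEquivProd α β).hasSum_iff.mp <| HasSum.sigma_of_nonneg_s9 (fun _ => hF _) hrow hu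

theorem hasSum_comp_of_finite_fibers {γ : Type*} (σ : α → γ)
    (hσ : ∀ c, {a : α | σ a = c}.Finite) {g : γ → ℝ} (hg : 0 ≤ g) {s : ℝ}
    (hs : HasSum (fun c => Nat.card {a // σ a = c} * g c) s) : HasSum (fun a => g (σ a)) s := by
  have hfiber : ∀ c, HasSum (fun _ : {a // σ a = c} => g c) (Nat.card {a // σ a = c} * g c) :=
    fun c => by
      have : Fintype {a // σ a = c} := (hσ c).fintype
      simpa [Nat.card_eq_fintype_card] using hasSum_fintype fun _ : {a // σ a = c} => g c
  refine (Equiv.sigmaFiberEquiv σ).hasSum_iff.mp ?_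
  refine (HasSum.sigma_of_nonneg_s9 (F := fun p : Σ c, {a // σ a = c} => g p.1)
    (fun _ => hg _) hfiber hs).congr_fun ?_
  rintro ⟨c, a, rfl⟩
  rfl

theorem hasSum_pi_prod_of_nonneg {κ β : Type*} [Fintype κ] {g : κ → β → ℝ} (hg : 0 ≤ g)
    {s : κ → ℝ} (hs : ∀ i, HasSum (g i) (s i)) :
    HasSum (fun n : κ → β => ∏ i, g i (n i)) (∏ i, s i) := by
  have key := Fintype.induction_empty_option (P := fun κ _ => ∀ g : κ → β → ℝ, 0 ≤ g →
    ∀ s : κ → ℝ, (∀ i, HasSum (g i) (s i)) → HasSum (fun n : κ → β => ∏ i, g i (n i)) (∏ i, s i))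
    (fun κ κ' _ e ih g hg s hs => by
      let _ : Fintype κ := Fintype.ofEquiv κ' e.symm
      have h := ih (fun i => g (e i)) (fun i => hg (e i)) (fun i => s (e i)) fun i => hs (e i)
      rw [e.prod_comp s] at h
      refine (e.arrowCongr (Equiv.refl β)).hasSum_iff.mp (h.congr_fun fun n => ?_)
      simp [← e.prod_comp (fun j => g j (n (e.symm j)))])
    (fun g _ s _ => by simp)
    (fun κ _ ih g hg s hs => by
      have hsome := ih (fun i => g (some i)) (fun i => hg (some i)) (fun i => s (some i))
        fun i => hs (some i)
      have hmul := (hs none).mul hsome <| (hs none).summable.mul_of_nonneg hsome.summable (hg none)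
        fun n => Finset.prod_nonneg fun i _ => hg (some i) (n i)
      rw [← Fintype.prod_option] at hmul
      refine Equiv.piOptionEquivProd.symm.hasSum_iff.mp (hmul.congr_fun fun n => ?_)
      simp [Fintype.prod_option]) κ
  exact key g hg s hs

end NonnegSeries

theorem Multiset.prod_map_eq_prod_pow_count {κ M : Type*} [Fintype κ] [DecidableEq κ]
    [CommMonoid M] (m : Multiset κ) (f : κ → M) : (m.map f).prod = ∏ i, f i ^ m.count i := by
  rw [Finset.prod_multiset_map_count]
  exact Finset.prod_subset (Finset.subset_univ _) fun i _ hi => by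
    rw [Multiset.count_eq_zero.mpr (Multiset.mem_toFinset.not.mp hi), pow_zero]

theorem Multiset.prod_map_pow_eq_pow_sum {ι M : Type*} [CommMonoid M] (x : M) (f : ι → ℕ)
    (m : Multiset ι) : (m.map fun i => x ^ f i).prod = x ^ (m.map f).sum := by
  induction m using Multiset.induction_on with
  | empty => simp
  | cons i m ih => simp [ih, pow_add]

theorem Real.exp_neg_log_one_sub {x : ℝ} (hx : x < 1) : exp (-log (1 - x)) = (1 - x)⁻¹ := by
  rw [exp_neg, exp_log (sub_pos.mpr hx)]

theorem hasSum_multiset_prod_of_fintype {κ : Type*} [Fintype κ] {f : κ → ℝ} (hf0 : 0 ≤ f)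
    (hf1 : ∀ i, f i < 1) :
    HasSum (fun m : Multiset κ => (m.map f).prod) (∏ i, (1 - f i)⁻¹) := by
  classical
  have h := hasSum_pi_prod_of_nonneg (g := fun i k => f i ^ k) (fun i k => pow_nonneg (hf0 i) k)
    fun i => hasSum_geometric_of_lt_one (hf0 i) (hf1 i)
  refine ((Multiset.toFinsupp.toEquiv.trans Finsupp.equivFunOnFinite).hasSum_iff.mpr h).congr_fun
    fun m => ?_
  simp [Multiset.prod_map_eq_prod_pow_count]

section EulerProduct

variable {ι : Type*} {f : ι → ℝ}

theorem hasSum_neg_log_one_sub_of_hasSum_pow (hf0 : 0 ≤ f) (hf1 : ∀ i, f i < 1)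
    {u : ℕ → ℝ} {T : ℝ} (hu : ∀ k, HasSum (fun i => f i ^ (k + 1)) (u k))
    (hT : HasSum (fun k => u k / (k + 1)) T) : HasSum (fun i => -log (1 - f i)) T := by
  have hnonneg : 0 ≤ fun p : ℕ × ι => f p.2 ^ (p.1 + 1) / (p.1 + 1) := fun p =>
    div_nonneg (pow_nonneg (hf0 p.2) _) (by positivity)
  have hrow : ∀ k : ℕ, HasSum (fun i => f i ^ (k + 1) / (k + 1)) (u k / (k + 1)) :=
    fun k => (hu k).div_const _
  have hF : HasSum (fun p : ℕ × ι => f p.2 ^ (p.1 + 1) / (p.1 + 1)) T :=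
    HasSum.prod_of_nonneg hnonneg hrow hT
  have hF' := (Equiv.prodComm ι ℕ).hasSum_iff.mpr hF
  have hcol : ∀ i, HasSum (fun n : ℕ => f i ^ (n + 1) / (n + 1)) (-log (1 - f i)) := fun i =>
    hasSum_pow_div_log_of_abs_lt_one (by rw [abs_of_nonneg (hf0 i)]; exact hf1 i)
  exact hF'.prod_fiberwise hcol

theorem hasSum_indicator_multiset_prod (hf0 : 0 ≤ f) (hf1 : ∀ i, f i < 1) (s : Finset ι) :
    HasSum ({m : Multiset ι | ∀ i ∈ m, i ∈ s}.indicator fun m => (m.map f).prod)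
      (∏ i ∈ s, (1 - f i)⁻¹) := by
  have h := hasSum_multiset_prod_of_fintype (f := fun i : s => f i) (fun i => hf0 i) fun i => hf1 i
  rw [Finset.prod_coe_sort s fun i => (1 - f i)⁻¹] at h
  refine (Multiset.map_injective Subtype.val_injective).hasSum_iff (fun m hm => ?_) |>.mp
    (h.congr_fun fun m => ?_)
  · refine Set.indicator_of_notMem (fun hms => hm ?_) _
    lift m to Multiset s using hms
    exact ⟨m, rfl⟩
  · rw [Function.comp_apply, Set.indicator_of_mem (by simp +contextual), Multiset.map_map]
    rfl

theorem hasSum_multiset_prod_of_hasSum_neg_log (hf0 : 0 ≤ f) (hf1 : ∀ i, f i < 1) {T : ℝ}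
    (hT : HasSum (fun i => -log (1 - f i)) T) :
    HasSum (fun m : Multiset ι => (m.map f).prod) (exp T) := by
  classical
  set g := fun m : Multiset ι => (m.map f).prod
  have hg0 : 0 ≤ g := fun m => Multiset.prod_nonneg fun _ hx => by
    obtain ⟨i, -, rfl⟩ := Multiset.mem_map.mp hx
    exact hf0 i
  have hprod : HasProd (fun i => (1 - f i)⁻¹) (exp T) := by
    simpa [Function.comp_def, Real.exp_neg_log_one_sub (hf1 _)] using hT.rexp
  have hpartial : ∀ s : Finset ι, ∏ i ∈ s, (1 - f i)⁻¹ ≤ exp T := fun s => by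
    rw [← Finset.prod_congr rfl fun i _ => Real.exp_neg_log_one_sub (hf1 i), ← Real.exp_sum]
    refine exp_le_exp.mpr (sum_le_hasSum s (fun i _ => ?_) hT)
    exact neg_nonneg.mpr (log_nonpos (sub_nonneg.mpr (hf1 i).le) (sub_le_self _ (hf0 i)))
  have hsum_le : ∀ M : Finset (Multiset ι), ∑ m ∈ M, g m ≤ exp T := fun M => by
    -- the multisets in `M` only involve the finitely many elements of their supports
    set s := M.biUnion Multiset.toFinset
    have hM : ∀ m ∈ M, m ∈ {m : Multiset ι | ∀ i ∈ m, i ∈ s} := fun m hm i hi =>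
      Finset.mem_biUnion.mpr ⟨m, hm, Multiset.mem_toFinset.mpr hi⟩
    calc ∑ m ∈ M, g m = ∑ m ∈ M, {m : Multiset ι | ∀ i ∈ m, i ∈ s}.indicator g m :=
          Finset.sum_congr rfl fun m hm => (Set.indicator_of_mem (hM m hm) g).symm
      _ ≤ ∏ i ∈ s, (1 - f i)⁻¹ :=
          sum_le_hasSum M (fun m _ => Set.indicator_nonneg (fun m _ => hg0 m) m)
            (hasSum_indicator_multiset_prod hf0 hf1 s)
      _ ≤ exp T := hpartial s
  have hsummable : Summable g := summable_of_sum_le hg0 hsum_le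
  have hle_tsum : ∀ s : Finset ι, ∏ i ∈ s, (1 - f i)⁻¹ ≤ ∑' m, g m := fun s =>
    hasSum_le (Set.indicator_le_self' fun m _ => hg0 m)
      (hasSum_indicator_multiset_prod hf0 hf1 s) hsummable.hasSum
  have htsum : ∑' m, g m = exp T :=
    le_antisymm (Real.tsum_le_of_sum_le hg0 hsum_le) (le_of_tendsto' hprod hle_tsum)
  exact htsum ▸ hsummable.hasSum

end EulerProduct

theorem multiset_class_boltzmann_summable_general
    (A : Type*) (sa : A → ℕ)
    (hfa : ∀ n : ℕ, {α : A | sa α = n}.Finite)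
    (h0 : ∀ α : A, sa α ≠ 0)
    (a : ℕ → ℕ) (ha : ∀ n, a n = Nat.card {α : A // sa α = n})
    (x : ℝ) (hx0 : 0 < x) (hx1 : x < 1)
    (hAk : ∀ k : ℕ, Summable fun n : ℕ => (a n : ℝ) * (x ^ (k + 1)) ^ n)
    (hsum : Summable fun k : ℕ =>
      (∑' n : ℕ, (a n : ℝ) * (x ^ (k + 1)) ^ n) / (k + 1)) :
    HasSum (fun m : Multiset A => x ^ (m.map sa).sum)
      (Real.exp (∑' k : ℕ, (∑' n : ℕ, (a n : ℝ) * (x ^ (k + 1)) ^ n) / (k + 1))) := by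
  have hf0 : 0 ≤ fun α => x ^ sa α := fun α => pow_nonneg hx0.le _
  have hf1 : ∀ α, x ^ sa α < 1 := fun α => pow_lt_one₀ hx0.le hx1 (h0 α)
  have hpow : ∀ k : ℕ, HasSum (fun α => (x ^ sa α) ^ (k + 1))
      (∑' n, (a n : ℝ) * (x ^ (k + 1)) ^ n) := fun k => by
    simp_rw [← pow_mul, mul_comm (sa _), pow_mul]
    exact hasSum_comp_of_finite_fibers sa hfa (fun n => pow_nonneg (by positivity) n)
      (by simpa [ha] using (hAk k).hasSum)
  have hlog := hasSum_neg_log_one_sub_of_hasSum_pow hf0 hf1 hpow hsum.hasSum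
  simpa [Multiset.prod_map_pow_eq_pow_sum] using
    hasSum_multiset_prod_of_hasSum_neg_log hf0 hf1 hlog

/-- If `A` has no structures of size `0`, `0 < x < 1`, each series
`A(x^k) = ∑_n a n * (x^k)^n` converges and `∑_{k ≥ 1} A(x^k)/k` converges, then
the family `(x ^ |m|)_{m ∈ MSet(A)}` indexed by all finite multisets over `A`
(size being the sum, with multiplicity, of the member sizes) is summable with sum
`exp (∑_{k ≥ 1} A(x^k) / k)`. -/
theorem multiset_class_boltzmann_summable
    (A : Type*) [Countable A] (sa : A → ℕ)
    (hfa : ∀ n : ℕ, {α : A | sa α = n}.Finite)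
    (h0 : ∀ α : A, sa α ≠ 0)
    (a : ℕ → ℕ) (ha : ∀ n, a n = Nat.card {α : A // sa α = n})
    (x : ℝ) (hx0 : 0 < x) (hx1 : x < 1)
    (hAk : ∀ k : ℕ, Summable fun n : ℕ => (a n : ℝ) * (x ^ (k + 1)) ^ n)
    (hsum : Summable fun k : ℕ =>
      (∑' n : ℕ, (a n : ℝ) * (x ^ (k + 1)) ^ n) / (k + 1)) :
    HasSum (fun m : Multiset A => x ^ (m.map sa).sum)
      (Real.exp (∑' k : ℕ, (∑' n : ℕ, (a n : ℝ) * (x ^ (k + 1)) ^ n) / (k + 1))) :=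
  multiset_class_boltzmann_summable_general A sa hfa h0 a ha x hx0 hx1 hAk hsum
end

section
/- Let C be a combinatorial class whose counting sequence is nondegenerate in the sense that there exist two distinct integers m ≠ n with c_m > 0 and c_n > 0, and suppose C(x) > 0 for all x ∈ (0,ρ). Then the expected-size function N(x) = x·C′(x)/C(x) is strictly increasing on (0,ρ); consequently, for every integer n the equation N(x) = n has at most one solution x ∈ (0,ρ). -/
/-!
Write `S(x) = ∑ cₙ xⁿ` and `T(x) = ∑ n cₙ xⁿ`. Termwise differentiation gives `x S'(x) = T(x)`,
so `N = T / S`. For `0 < x < y`, `T(y) S(x) - T(x) S(y)` is a double series over pairs `(m, n)`;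
symmetrized under `m ↔ n` its terms become `cₘ cₙ (m - n) (yᵐ xⁿ - xᵐ yⁿ) ≥ 0`, and the term at the
two distinct sizes with `cₘ, cₙ > 0` is strictly positive.
-/

open Filter Set

theorem summable_nat_mul_abs_mul_pow_of_lt {a : ℕ → ℝ} {r s : ℝ}
    (hs : Summable fun n ↦ a n * s ^ n) (hr : 0 ≤ r) (hrs : r < s) :
    Summable fun n : ℕ ↦ n * |a n| * r ^ n := by
  have hs0 : 0 < s := hr.trans_lt hrs
  have hgeom : Summable fun n : ℕ ↦ ‖(n : ℝ) * (r / s) ^ n‖ := by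
    have ht : ‖r / s‖ < 1 := by
      rw [Real.norm_of_nonneg (by positivity), div_lt_one hs0]; exact hrs
    simpa using (summable_pow_mul_geometric_of_norm_lt_one 1 ht).norm
  have hterm : Tendsto (fun n ↦ |a n * s ^ n|) cofinite (nhds 0) := by
    simpa using hs.tendsto_cofinite_zero.abs
  refine (hgeom.mul_tendsto_const hterm).congr fun n ↦ ?_
  rw [abs_mul, abs_of_pos (pow_pos hs0 n), div_pow]
  field_simp

theorem nat_mul_pow_pred_mul (n : ℕ) (x : ℝ) : n * x ^ (n - 1) * x = n * x ^ n := by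
  cases n with
  | zero => simp
  | succ k => rw [Nat.add_sub_cancel, mul_assoc, ← pow_succ]

theorem hasDerivAt_tsum_mul_pow {a : ℕ → ℝ} {s x : ℝ} (hs : Summable fun n ↦ a n * s ^ n)
    (hx : |x| < s) :
    HasDerivAt (fun y ↦ ∑' n, a n * y ^ n) (∑' n : ℕ, a n * (n * x ^ (n - 1))) x := by
  obtain ⟨r, hxr, hrs⟩ := exists_between hx
  have hr0 : 0 < r := (abs_nonneg x).trans_lt hxr
  have hbound : Summable fun n : ℕ ↦ n * |a n| * r ^ (n - 1) := by
    refine ((summable_nat_mul_abs_mul_pow_of_lt hs hr0.le hrs).div_const r).congr fun n ↦ ?_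
    rw [div_eq_iff hr0.ne', mul_right_comm, ← nat_mul_pow_pred_mul]
    ring
  refine hasDerivAt_tsum_of_isPreconnected hbound isOpen_Ioo (convex_Ioo (-r) r).isPreconnected
    (fun n y _ ↦ (hasDerivAt_pow n y).const_mul (a n)) (fun n y hy ↦ ?_)
    (y₀ := 0) (by simpa using hr0) ?_ (abs_lt.mp hxr)
  · have hyr : |y| ≤ r := abs_le.mpr ⟨hy.1.le, hy.2.le⟩
    rw [Real.norm_eq_abs, abs_mul, abs_mul, Nat.abs_cast, abs_pow, mul_left_comm, ← mul_assoc]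
    gcongr
  · exact summable_of_ne_finset_zero (s := {0}) (by simp +contextual)

theorem mul_deriv_tsum_mul_pow {a : ℕ → ℝ} {s x : ℝ} (hs : Summable fun n ↦ a n * s ^ n)
    (hx : |x| < s) :
    x * deriv (fun y ↦ ∑' n, a n * y ^ n) x = ∑' n : ℕ, n * a n * x ^ n := by
  rw [(hasDerivAt_tsum_mul_pow hs hx).deriv, ← tsum_mul_left]
  congr with n
  rw [mul_right_comm (n : ℝ), ← nat_mul_pow_pred_mul]
  ring

theorem sub_mul_sub_pow_mul_pow_pos {x y : ℝ} (hx : 0 < x) (hxy : x < y) {m n : ℕ}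
    (hmn : m ≠ n) : 0 < ((m : ℝ) - n) * (y ^ m * x ^ n - x ^ m * y ^ n) := by
  wlog h : m < n generalizing m n
  · have := this hmn.symm (by omega)
    linarith
  have hpow : y ^ m * x ^ n < x ^ m * y ^ n := by
    rw [← pow_mul_pow_sub x h.le, ← pow_mul_pow_sub y h.le, mul_left_comm]
    have hy : 0 < y := hx.trans hxy
    gcongr
    omega
  refine mul_pos_of_neg_of_neg ?_ (by linarith)
  rw [sub_neg]
  exact_mod_cast h

theorem tsum_pos_of_add_swap {α : Type*} {T : α × α → ℝ} (hT : Summable T)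
    (hnn : ∀ p, 0 ≤ T p + T p.swap) (p₀ : α × α) (hp₀ : 0 < T p₀ + T p₀.swap) :
    0 < ∑' p, T p := by
  have hswap : Summable fun p : α × α ↦ T p.swap := hT.prod_symm
  have htsum_swap : ∑' p : α × α, T p.swap = ∑' p, T p := (Equiv.prodComm α α).tsum_eq T
  have htwice : ∑' p, (T p + T p.swap) = 2 * ∑' p, T p := by
    rw [hT.tsum_add hswap, htsum_swap]
    ring
  have := (hT.add hswap).tsum_pos hnn p₀ hp₀
  linarith

theorem tsum_mul_pow_pos {a : ℕ → ℝ} (ha : ∀ n, 0 ≤ a n) {m : ℕ} (hm : 0 < a m) {x : ℝ}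
    (hx : 0 < x) (hs : Summable fun n ↦ a n * x ^ n) : 0 < ∑' n, a n * x ^ n :=
  hs.tsum_pos (fun n ↦ mul_nonneg (ha n) (pow_nonneg hx.le n)) m (by positivity)

theorem tsum_nat_mul_mul_pow_mul_tsum_lt {a : ℕ → ℝ} (ha : ∀ n, 0 ≤ a n)
    (hnd : ∃ m n, m ≠ n ∧ 0 < a m ∧ 0 < a n) {x y s : ℝ} (hx : 0 < x) (hxy : x < y) (hys : y < s)
    (hs : Summable fun n ↦ a n * s ^ n) :
    (∑' n : ℕ, n * a n * x ^ n) * ∑' n, a n * y ^ n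
      < (∑' n : ℕ, n * a n * y ^ n) * ∑' n, a n * x ^ n := by
  have hy : 0 < y := hx.trans hxy
  have hS : ∀ z, 0 ≤ z → z < s → Summable fun n ↦ a n * z ^ n := fun z hz hzs ↦
    hs.of_nonneg_of_le (fun n ↦ mul_nonneg (ha n) (pow_nonneg hz n))
      fun n ↦ mul_le_mul_of_nonneg_left (pow_le_pow_left₀ hz hzs.le n) (ha n)
  have hT : ∀ z, 0 ≤ z → z < s → Summable fun n : ℕ ↦ n * a n * z ^ n := fun z hz hzs ↦ by
    simpa only [abs_of_nonneg (ha _)] using summable_nat_mul_abs_mul_pow_of_lt hs hz hzs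
  have hS0 : ∀ z, 0 ≤ z → ∀ n, 0 ≤ a n * z ^ n := fun z hz n ↦ by have := ha n; positivity
  have hT0 : ∀ z, 0 ≤ z → ∀ n : ℕ, 0 ≤ n * a n * z ^ n := fun z hz n ↦ by have := ha n; positivity
  have hSx := hS x hx.le (hxy.trans hys)
  have hSy := hS y hy.le hys
  have hTx := hT x hx.le (hxy.trans hys)
  have hTy := hT y hy.le hys
  have hsum₁ := hTy.mul_of_nonneg hSx (hT0 y hy.le) (hS0 x hx.le)
  have hsum₂ := hTx.mul_of_nonneg hSy (hT0 x hx.le) (hS0 y hy.le)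
  set D : ℕ × ℕ → ℝ := fun p ↦
    p.1 * a p.1 * y ^ p.1 * (a p.2 * x ^ p.2) - p.1 * a p.1 * x ^ p.1 * (a p.2 * y ^ p.2)
  have hD : ∑' p, D p = (∑' n : ℕ, n * a n * y ^ n) * (∑' n, a n * x ^ n)
      - (∑' n : ℕ, n * a n * x ^ n) * ∑' n, a n * y ^ n := by
    rw [hsum₁.tsum_sub hsum₂, hTy.tsum_mul_tsum hSx hsum₁, hTx.tsum_mul_tsum hSy hsum₂]
  have hD_swap : ∀ p : ℕ × ℕ, D p + D p.swap
      = a p.1 * a p.2 * (((p.1 : ℝ) - p.2) * (y ^ p.1 * x ^ p.2 - x ^ p.1 * y ^ p.2)) := fun p ↦ by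
    simp only [D, Prod.fst_swap, Prod.snd_swap]
    ring
  obtain ⟨m, n, hmn, hm, hn⟩ := hnd
  have hpos : 0 < ∑' p, D p := by
    refine tsum_pos_of_add_swap (hsum₁.sub hsum₂) (fun p ↦ ?_) (m, n) ?_
    · rw [hD_swap]
      by_cases hp : p.1 = p.2
      · simp [hp]
      · exact mul_nonneg (mul_nonneg (ha _) (ha _)) (sub_mul_sub_pow_mul_pow_pos hx hxy hp).le
    · rw [hD_swap]
      exact mul_pos (mul_pos hm hn) (sub_mul_sub_pow_mul_pow_pos hx hxy hmn)
  linarith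

theorem strictMonoOn_tsum_nat_mul_mul_pow_div_tsum {a : ℕ → ℝ} (ha : ∀ n, 0 ≤ a n)
    (hnd : ∃ m n, m ≠ n ∧ 0 < a m ∧ 0 < a n) {ρ : ℝ}
    (hrad : ∀ y, 0 ≤ y → y < ρ → Summable fun n ↦ a n * y ^ n) :
    StrictMonoOn (fun x ↦ (∑' n : ℕ, n * a n * x ^ n) / ∑' n, a n * x ^ n) (Ioo 0 ρ) := by
  intro x hx y hy hxy
  obtain ⟨s, hys, hsρ⟩ := exists_between hy.2
  have ⟨m, _, _, hm, _⟩ := hnd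
  have hs := hrad s (hy.1.trans hys).le hsρ
  rw [div_lt_div_iff₀ (tsum_mul_pow_pos ha hm hx.1 (hrad x hx.1.le hx.2))
    (tsum_mul_pow_pos ha hm hy.1 (hrad y hy.1.le hy.2))]
  exact tsum_nat_mul_mul_pow_mul_tsum_lt ha hnd hx.1 hxy hys hs

theorem expected_size_strictMono_general
    (c : ℕ → ℕ)
    (ρ : ℝ)
    (hrad : ∀ y : ℝ, 0 ≤ y → y < ρ → Summable fun n : ℕ => (c n : ℝ) * y ^ n)
    (hnd : ∃ m n : ℕ, m ≠ n ∧ 0 < c m ∧ 0 < c n)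
    (f : ℝ → ℝ) (hf : ∀ y : ℝ, f y = ∑' n : ℕ, (c n : ℝ) * y ^ n)
    (N : ℝ → ℝ) (hN : ∀ y : ℝ, N y = y * deriv f y / f y) :
    StrictMonoOn N (Set.Ioo (0 : ℝ) ρ) ∧
    ∀ (n : ℤ) (x₁ x₂ : ℝ), x₁ ∈ Set.Ioo (0 : ℝ) ρ → x₂ ∈ Set.Ioo (0 : ℝ) ρ →
      N x₁ = n → N x₂ = n → x₁ = x₂ := by
  have hnd_real : ∃ m n, m ≠ n ∧ (0 : ℝ) < c m ∧ (0 : ℝ) < c n := by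
    obtain ⟨m, n, hmn, hm, hn⟩ := hnd
    exact ⟨m, n, hmn, by exact_mod_cast hm, by exact_mod_cast hn⟩
  have hN_eq : EqOn (fun x ↦ (∑' n : ℕ, n * (c n : ℝ) * x ^ n) / ∑' n, (c n : ℝ) * x ^ n) N
      (Ioo 0 ρ) := by
    rintro x ⟨hx, hxρ⟩
    obtain ⟨s, hxs, hsρ⟩ := exists_between hxρ
    rw [hN, funext hf, mul_deriv_tsum_mul_pow (hrad s (hx.trans hxs).le hsρ)
      (by rwa [abs_of_pos hx])]
  have hmono : StrictMonoOn N (Ioo 0 ρ) :=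
    (strictMonoOn_tsum_nat_mul_mul_pow_div_tsum (fun n ↦ Nat.cast_nonneg (c n)) hnd_real hrad).congr
      hN_eq
  exact ⟨hmono, fun n x₁ x₂ h₁ h₂ e₁ e₂ ↦ hmono.injOn h₁ h₂ (e₁.trans e₂.symm)⟩

/-- If the counting sequence is nondegenerate (two distinct sizes
`m ≠ n` with `c m > 0` and `c n > 0`) and `C(x) > 0` on `(0, ρ)`, then the
expected-size function `N(x) = x * C'(x) / C(x)` is strictly increasing on
`(0, ρ)`; consequently, for every integer `n` the equation `N(x) = n` has at most
one solution in `(0, ρ)`. -/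
theorem expected_size_strictMono
    (C : Type*) [Countable C] (size : C → ℕ)
    (hfin : ∀ n : ℕ, {γ : C | size γ = n}.Finite)
    (c : ℕ → ℕ) (hc : ∀ n, c n = Nat.card {γ : C // size γ = n})
    (ρ : ℝ) (hρ : 0 < ρ)
    (hrad : ∀ y : ℝ, 0 ≤ y → y < ρ → Summable fun n : ℕ => (c n : ℝ) * y ^ n)
    (hnd : ∃ m n : ℕ, m ≠ n ∧ 0 < c m ∧ 0 < c n)
    (f : ℝ → ℝ) (hf : ∀ y : ℝ, f y = ∑' n : ℕ, (c n : ℝ) * y ^ n)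
    (hpos : ∀ y ∈ Set.Ioo (0 : ℝ) ρ, 0 < f y)
    (N : ℝ → ℝ) (hN : ∀ y : ℝ, N y = y * deriv f y / f y) :
    StrictMonoOn N (Set.Ioo (0 : ℝ) ρ) ∧
    ∀ (n : ℤ) (x₁ x₂ : ℝ), x₁ ∈ Set.Ioo (0 : ℝ) ρ → x₂ ∈ Set.Ioo (0 : ℝ) ρ →
      N x₁ = n → N x₂ = n → x₁ = x₂ :=
  expected_size_strictMono_general c ρ hrad hnd f hf N hN
end

section
/- Let C be a combinatorial class with C(x) > 0 on (0,ρ), expected-size function μ₁(x) = x·C′(x)/C(x) and size standard deviation σ(x) = √(μ₂(x) − μ₁(x)²), where μ₂(x) = (x·C′(x) + x²·C″(x))/C(x). Suppose the size distribution is 'lumpy': μ₁(x) → ∞ and σ(x)/μ₁(x) → 0 as x → ρ⁻. Then for every ε > 0, the probability under the ordinary Boltzmann distribution with parameter x that the sampled structure has size in the interval [(1−ε)·μ₁(x), (1+ε)·μ₁(x)] tends to 1 as x → ρ⁻. -/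
/-!
With `θ = z d/dz`, the operator `θ` multiplies the `n`-th coefficient of a power series by `n`.
Hence `y f'(y) = θf(y)` and `y f'(y) + y² f''(y) = θ²f(y)` are `f(y)` times the first two
moments of the size under the Boltzmann weights `c n yⁿ / f(y)`, so `σ²` is the variance of
the size. Chebyshev's inequality bounds the Boltzmann mass outside `|n - μ₁| ≤ ε μ₁` by
`(σ / (ε μ₁))²`, which tends to `0` by lumpiness.
-/

open Filter Set Topology

section PowerSeries

variable {a : ℕ → ℝ} {ρ : ℝ}

theorem summable_natCast_mul_coeff_mul_pow (ha : ∀ n, 0 ≤ a n)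
    (hrad : ∀ r ∈ Ioo 0 ρ, Summable fun n => a n * r ^ n) {r : ℝ} (hr : r ∈ Ioo 0 ρ) :
    Summable fun n : ℕ => n * a n * r ^ n := by
  obtain ⟨s, hrs, hsρ⟩ := exists_between hr.2
  have hs0 : 0 < s := hr.1.trans hrs
  have hq : ‖r / s‖ < 1 := by
    rwa [Real.norm_of_nonneg (div_nonneg hr.1.le hs0.le), div_lt_one hs0]
  obtain ⟨M, hM⟩ := (summable_pow_mul_geometric_of_norm_lt_one 1 hq).tendsto_atTop_zero
    |>.bddAbove_range
  refine .of_nonneg_of_le (fun n => by have := ha n; have := hr.1; positivity) (fun n => ?_)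
    ((hrad s ⟨hs0, hsρ⟩).mul_left M)
  calc (n : ℝ) * a n * r ^ n = ((n : ℝ) ^ 1 * (r / s) ^ n) * (a n * s ^ n) := by
        rw [div_pow]; field_simp
    _ ≤ M * (a n * s ^ n) := by
        have := ha n
        gcongr
        exact hM ⟨n, rfl⟩

theorem summable_shifted_coeff_mul_pow (ha : ∀ n, 0 ≤ a n)
    (hrad : ∀ r ∈ Ioo 0 ρ, Summable fun n => a n * r ^ n) {r : ℝ} (hr : r ∈ Ioo 0 ρ) :
    Summable fun n : ℕ => ((n : ℝ) + 1) * a (n + 1) * r ^ n := by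
  have h := (summable_nat_add_iff 1).mpr (summable_natCast_mul_coeff_mul_pow ha hrad hr)
  refine (h.mul_left r⁻¹).congr fun n => ?_
  have := hr.1.ne'
  push_cast
  field_simp
  ring

theorem hasDerivAt_tsum_coeff_mul_pow (ha : ∀ n, 0 ≤ a n)
    (hrad : ∀ r ∈ Ioo 0 ρ, Summable fun n => a n * r ^ n) {y : ℝ} (hy : y ∈ Ioo 0 ρ) :
    HasDerivAt (fun z => ∑' n, a n * z ^ n)
      (∑' n : ℕ, ((n : ℝ) + 1) * a (n + 1) * y ^ n) y := by
  obtain ⟨r, hyr, hrρ⟩ := exists_between hy.2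
  have hr : r ∈ Ioo 0 ρ := ⟨hy.1.trans hyr, hrρ⟩
  have hshift : (fun z => a 0 + ∑' n : ℕ, a (n + 1) * z ^ (n + 1)) =ᶠ[𝓝 y]
      fun z => ∑' n, a n * z ^ n := by
    filter_upwards [Ioo_mem_nhds hy.1 hy.2] with z hz
    simp [(hrad z hz).tsum_eq_zero_add]
  -- differentiating the tail termwise avoids the exponent `n - 1`
  have htail : HasDerivAt (fun z => ∑' n : ℕ, a (n + 1) * z ^ (n + 1))
      (∑' n : ℕ, ((n : ℝ) + 1) * a (n + 1) * y ^ n) y := by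
    refine hasDerivAt_tsum_of_isPreconnected (summable_shifted_coeff_mul_pow ha hrad hr)
      isOpen_Ioo isPreconnected_Ioo (t := Ioo 0 r) (y₀ := y)
      (g := fun n z => a (n + 1) * z ^ (n + 1))
      (g' := fun n z => ((n : ℝ) + 1) * a (n + 1) * z ^ n)
      (fun n z _ => ?_) (fun n z hz => ?_)
      ⟨hy.1, hyr⟩ ((summable_nat_add_iff 1).mpr (hrad y hy)) ⟨hy.1, hyr⟩
    · simpa [mul_comm, mul_left_comm, mul_assoc] using
        (hasDerivAt_pow (n + 1) z).const_mul (a (n + 1))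
    · have := ha (n + 1)
      rw [Real.norm_eq_abs, abs_of_nonneg (by have := hz.1.le; positivity)]
      gcongr
      exacts [hz.1.le, hz.2.le]
  exact (htail.const_add (a 0)).congr_of_eventuallyEq hshift.symm

theorem mul_deriv_tsum_coeff_mul_pow (ha : ∀ n, 0 ≤ a n)
    (hrad : ∀ r ∈ Ioo 0 ρ, Summable fun n => a n * r ^ n) {y : ℝ} (hy : y ∈ Ioo 0 ρ) :
    y * deriv (fun z => ∑' n, a n * z ^ n) y = ∑' n : ℕ, n * a n * y ^ n := by
  rw [(hasDerivAt_tsum_coeff_mul_pow ha hrad hy).deriv, ← tsum_mul_left,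
    (summable_natCast_mul_coeff_mul_pow ha hrad hy).tsum_eq_zero_add]
  simp only [CharP.cast_eq_zero, zero_mul, zero_add, Nat.cast_add, Nat.cast_one, pow_succ]
  exact tsum_congr fun n => by ring

theorem mul_deriv_add_sq_mul_deriv_deriv_tsum_coeff_mul_pow (ha : ∀ n, 0 ≤ a n)
    (hrad : ∀ r ∈ Ioo 0 ρ, Summable fun n => a n * r ^ n) {y : ℝ} (hy : y ∈ Ioo 0 ρ) :
    y * deriv (fun z => ∑' n, a n * z ^ n) y
      + y ^ 2 * deriv (deriv fun z => ∑' n, a n * z ^ n) y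
      = ∑' n : ℕ, n * (n * a n) * y ^ n := by
  set F := fun z => ∑' n, a n * z ^ n
  have hderiv : deriv F =ᶠ[𝓝 y]
      fun z => ∑' n : ℕ, ((n : ℝ) + 1) * a (n + 1) * z ^ n := by
    filter_upwards [Ioo_mem_nhds hy.1 hy.2] with z hz
    exact (hasDerivAt_tsum_coeff_mul_pow ha hrad hz).deriv
  have hderiv_diff : DifferentiableAt ℝ (deriv F) y :=
    (hasDerivAt_tsum_coeff_mul_pow (fun n => by have := ha (n + 1); positivity)
      (fun r hr => summable_shifted_coeff_mul_pow ha hrad hr) hy).differentiableAt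
      |>.congr_of_eventuallyEq hderiv
  have hθ : (fun z => z * deriv F z) =ᶠ[𝓝 y] fun z => ∑' n : ℕ, (n * a n) * z ^ n := by
    filter_upwards [Ioo_mem_nhds hy.1 hy.2] with z hz
    exact mul_deriv_tsum_coeff_mul_pow ha hrad hz
  calc y * deriv F y + y ^ 2 * deriv (deriv F) y
      = y * deriv (fun z => z * deriv F z) y := by
        rw [((hasDerivAt_id' y).fun_mul hderiv_diff.hasDerivAt).deriv]; ring
    _ = ∑' n : ℕ, n * (n * a n) * y ^ n := by
        rw [hθ.deriv_eq]
        exact mul_deriv_tsum_coeff_mul_pow (fun n => by have := ha n; positivity)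
          (fun r hr => summable_natCast_mul_coeff_mul_pow ha hrad hr) hy

end PowerSeries

section Chebyshev

variable {ι : Type*} {X w : ι → ℝ}

theorem tsum_indicator_lt_abs_sub_le (hw : ∀ i, 0 ≤ w i) {m : ℝ}
    (hs : Summable fun i => (X i - m) ^ 2 * w i) {t : ℝ} (ht : 0 < t) :
    ∑' i, {i | t < |X i - m|}.indicator w i ≤ (∑' i, (X i - m) ^ 2 * w i) / t ^ 2 := by
  have hle : ∀ i, {i | t < |X i - m|}.indicator w i ≤ (X i - m) ^ 2 * w i / t ^ 2 := by
    intro i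
    rw [le_div_iff₀ (by positivity)]
    by_cases hi : t < |X i - m|
    · rw [indicator_of_mem (show i ∈ {i | t < |X i - m|} from hi), mul_comm,
        ← sq_abs (X i - m)]
      have := hw i
      gcongr
    · rw [indicator_of_notMem (show i ∉ {i | t < |X i - m|} from hi), zero_mul]
      have := hw i
      positivity
  rw [← tsum_div_const]
  exact (hs.div_const _).of_nonneg_of_le (fun i => indicator_nonneg (fun i _ => hw i) i) hle
    |>.tsum_le_tsum hle (hs.div_const _)

theorem tsum_indicator_abs_sub_le_div_mem_Icc (hw : ∀ i, 0 ≤ w i) (h₀ : Summable w)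
    (h₁ : Summable fun i => X i * w i) (h₂ : Summable fun i => X i ^ 2 * w i)
    (hZ : 0 < ∑' i, w i) {m₁ m₂ : ℝ} (hm₁ : ∑' i, X i * w i = m₁ * ∑' i, w i)
    (hm₂ : ∑' i, X i ^ 2 * w i = m₂ * ∑' i, w i) {t : ℝ} (ht : 0 < t) :
    (∑' i, {i | |X i - m₁| ≤ t}.indicator w i) / ∑' i, w i
      ∈ Icc (1 - (m₂ - m₁ ^ 2) / t ^ 2) 1 := by
  have hcentral : HasSum (fun i => (X i - m₁) ^ 2 * w i) ((m₂ - m₁ ^ 2) * ∑' i, w i) := by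
    have h :=
      (h₂.hasSum.sub (h₁.hasSum.mul_left (2 * m₁))).add (h₀.hasSum.mul_left (m₁ ^ 2))
    rw [hm₁, hm₂] at h
    rw [show (m₂ - m₁ ^ 2) * ∑' i, w i
        = m₂ * ∑' i, w i - 2 * m₁ * (m₁ * ∑' i, w i) + m₁ ^ 2 * ∑' i, w i by ring]
    exact h.congr_fun fun i => by ring
  have hsplit : ∑' i, {i | |X i - m₁| ≤ t}.indicator w i
      + ∑' i, {i | t < |X i - m₁|}.indicator w i = ∑' i, w i := by
    have hcompl : {i | t < |X i - m₁|} = {i | |X i - m₁| ≤ t}ᶜ := by ext; simp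
    rw [hcompl, ← (h₀.indicator _).tsum_add (h₀.indicator _)]
    exact tsum_congr fun i => indicator_self_add_compl_apply _ _ _
  have hfar := tsum_indicator_lt_abs_sub_le hw hcentral.summable ht
  rw [hcentral.tsum_eq] at hfar
  rw [mem_Icc, le_div_iff₀ hZ, div_le_one hZ]
  have : (1 - (m₂ - m₁ ^ 2) / t ^ 2) * ∑' i, w i
      = ∑' i, w i - (m₂ - m₁ ^ 2) * (∑' i, w i) / t ^ 2 := by ring
  have hfar_nonneg : 0 ≤ ∑' i, {i | t < |X i - m₁|}.indicator w i :=
    tsum_nonneg fun i => indicator_nonneg (fun i _ => hw i) i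
  constructor <;> linarith

end Chebyshev

theorem tsum_comp_eq_tsum_card_fiber_mul {C : Type*} (size : C → ℕ)
    (hfin : ∀ n, {γ | size γ = n}.Finite) {g : ℕ → ℝ} (hg : ∀ n, 0 ≤ g n)
    (hs : Summable fun n => (Nat.card {γ // size γ = n} : ℝ) * g n) :
    ∑' γ, g (size γ) = ∑' n, (Nat.card {γ // size γ = n} : ℝ) * g n := by
  have : ∀ n, Finite {γ // size γ = n} := fun n => (hfin n).to_subtype
  have hfiber : ∀ p : Σ n, {γ // size γ = n},
      g (size (Equiv.sigmaFiberEquiv size p)) = g p.1 := fun ⟨n, γ⟩ => by simp [γ.2]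
  have hsum : Summable fun p : Σ n, {γ // size γ = n} => g p.1 :=
    (summable_sigma_of_nonneg fun p => hg p.1).2
      ⟨fun n => .of_finite, by simpa only [tsum_const, nsmul_eq_mul] using hs⟩
  rw [← (Equiv.sigmaFiberEquiv size).tsum_eq, tsum_congr hfiber,
    hsum.tsum_sigma' fun n => .of_finite]
  simp only [tsum_const, nsmul_eq_mul]

theorem tsum_indicator_near_mean_div_mem_Icc {a : ℕ → ℝ} {ρ : ℝ} (ha : ∀ n, 0 ≤ a n)
    (hrad : ∀ r ∈ Ioo 0 ρ, Summable fun n => a n * r ^ n) {F : ℝ → ℝ}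
    (hF : ∀ z, F z = ∑' n, a n * z ^ n) {y : ℝ} (hy : y ∈ Ioo 0 ρ) (hFy : 0 < F y)
    {μ₁ μ₂ : ℝ} (hμ₁ : μ₁ = y * deriv F y / F y)
    (hμ₂ : μ₂ = (y * deriv F y + y ^ 2 * deriv (deriv F) y) / F y) (hμ₁_pos : 0 < μ₁)
    {ε : ℝ} (hε : 0 < ε) :
    (∑' n, {n : ℕ | (1 - ε) * μ₁ ≤ n ∧ n ≤ (1 + ε) * μ₁}.indicator
      (fun n => a n * y ^ n) n) / F y ∈ Icc (1 - (μ₂ - μ₁ ^ 2) / (ε * μ₁) ^ 2) 1 := by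
  obtain rfl : F = fun z => ∑' n, a n * z ^ n := funext hF
  have hwindow : {n : ℕ | (1 - ε) * μ₁ ≤ n ∧ n ≤ (1 + ε) * μ₁}
      = {n : ℕ | |(n : ℝ) - μ₁| ≤ ε * μ₁} := by
    ext n
    simp only [mem_ofPred_eq, abs_sub_le_iff]
    constructor <;> rintro ⟨h₁, h₂⟩ <;> constructor <;> linarith
  have hθ := summable_natCast_mul_coeff_mul_pow ha hrad hy
  have hθθ := summable_natCast_mul_coeff_mul_pow (fun n => by have := ha n; positivity)
    (fun r hr => summable_natCast_mul_coeff_mul_pow ha hrad hr) hy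
  rw [hwindow]
  refine tsum_indicator_abs_sub_le_div_mem_Icc (X := fun n : ℕ => (n : ℝ))
    (fun n => by have := ha n; have := hy.1; positivity) (hrad y hy)
    (hθ.congr fun n => by ring) (hθθ.congr fun n => by ring) hFy ?_ ?_ (by positivity)
  · rw [hμ₁, div_mul_cancel₀ _ hFy.ne', mul_deriv_tsum_coeff_mul_pow ha hrad hy]
    exact tsum_congr fun n => by ring
  · rw [hμ₂, div_mul_cancel₀ _ hFy.ne',
      mul_deriv_add_sq_mul_deriv_deriv_tsum_coeff_mul_pow ha hrad hy]
    exact tsum_congr fun n => by ring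

theorem tsum_indicator_preimage_size_div {C : Type*} (size : C → ℕ)
    (hfin : ∀ n, {γ | size γ = n}.Finite) {c : ℕ → ℕ}
    (hc : ∀ n, c n = Nat.card {γ : C // size γ = n}) (S : Set ℕ) {y Z : ℝ} (hy : 0 ≤ y)
    (hZ : 0 ≤ Z) (hs : Summable fun n => (c n : ℝ) * y ^ n) :
    ∑' γ, (size ⁻¹' S).indicator (fun γ => y ^ size γ / Z) γ
      = (∑' n, S.indicator (fun n => (c n : ℝ) * y ^ n) n) / Z := by
  have hterm : ∀ n, (c n : ℝ) * S.indicator (fun n => y ^ n / Z) n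
      = S.indicator (fun n => (c n : ℝ) * y ^ n) n / Z := fun n => by
    by_cases hn : n ∈ S <;> simp [hn, mul_div_assoc]
  simp_rw [← tsum_div_const, ← hterm, hc]
  refine tsum_comp_eq_tsum_card_fiber_mul size hfin (g := S.indicator fun n => y ^ n / Z)
    (fun n => indicator_nonneg (fun n _ => by positivity) n) ?_
  simpa only [← hc, hterm] using (hs.indicator S).div_const Z

theorem lumpy_concentration_general
    (C : Type*) (size : C → ℕ)
    (hfin : ∀ n : ℕ, {γ : C | size γ = n}.Finite)
    (c : ℕ → ℕ) (hc : ∀ n, c n = Nat.card {γ : C // size γ = n})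
    (ρ : ℝ) (hρ : 0 < ρ)
    (hrad : ∀ y : ℝ, 0 ≤ y → y < ρ → Summable fun n : ℕ => (c n : ℝ) * y ^ n)
    (f : ℝ → ℝ) (hf : ∀ y : ℝ, f y = ∑' n : ℕ, (c n : ℝ) * y ^ n)
    (hpos : ∀ y ∈ Set.Ioo (0 : ℝ) ρ, 0 < f y)
    (μ₁ μ₂ σ : ℝ → ℝ)
    (hμ₁ : ∀ y : ℝ, μ₁ y = y * deriv f y / f y)
    (hμ₂ : ∀ y : ℝ, μ₂ y = (y * deriv f y + y ^ 2 * deriv (deriv f) y) / f y)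
    (hσ : ∀ y : ℝ, σ y = Real.sqrt (μ₂ y - μ₁ y ^ 2))
    (hmean : Filter.Tendsto μ₁ (nhdsWithin ρ (Set.Iio ρ)) Filter.atTop)
    (hlumpy : Filter.Tendsto (fun y => σ y / μ₁ y) (nhdsWithin ρ (Set.Iio ρ)) (nhds 0)) :
    ∀ ε : ℝ, 0 < ε →
      Filter.Tendsto
        (fun y : ℝ => ∑' γ : C,
          Set.indicator
            {γ : C | (1 - ε) * μ₁ y ≤ (size γ : ℝ) ∧ (size γ : ℝ) ≤ (1 + ε) * μ₁ y}
            (fun γ : C => y ^ size γ / f y) γ)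
        (nhdsWithin ρ (Set.Iio ρ)) (nhds 1) := by
  intro ε hε
  have hbounds : ∀ᶠ y in 𝓝[<] ρ, ∑' γ : C,
      {γ : C | (1 - ε) * μ₁ y ≤ (size γ : ℝ) ∧ (size γ : ℝ) ≤ (1 + ε) * μ₁ y}.indicator
        (fun γ : C => y ^ size γ / f y) γ ∈ Icc (1 - (σ y / μ₁ y) ^ 2 / ε ^ 2) 1 := by
    filter_upwards [Ioo_mem_nhdsLT hρ, hmean.eventually_gt_atTop 0] with y hy hμ
    have hmass := tsum_indicator_near_mean_div_mem_Icc (a := fun n => (c n : ℝ))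
      (fun n => (c n).cast_nonneg) (fun r hr => hrad r hr.1.le hr.2) hf hy (hpos y hy) (hμ₁ y)
      (hμ₂ y) hμ hε
    have hvar : μ₂ y - μ₁ y ^ 2 ≤ σ y ^ 2 := by
      rw [hσ, Real.sq_sqrt']
      exact le_max_left _ _
    have hprob := tsum_indicator_preimage_size_div size hfin hc
      {n : ℕ | (1 - ε) * μ₁ y ≤ n ∧ n ≤ (1 + ε) * μ₁ y} hy.1.le (hpos y hy).le
      (hrad y hy.1.le hy.2)
    rw [preimage_ofPred_eq] at hprob
    rw [hprob]
    refine ⟨le_trans ?_ hmass.1, hmass.2⟩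
    calc 1 - (σ y / μ₁ y) ^ 2 / ε ^ 2 = 1 - σ y ^ 2 / (ε * μ₁ y) ^ 2 := by ring
      _ ≤ 1 - (μ₂ y - μ₁ y ^ 2) / (ε * μ₁ y) ^ 2 := by gcongr
  have hlower : Tendsto (fun y => 1 - (σ y / μ₁ y) ^ 2 / ε ^ 2) (𝓝[<] ρ) (𝓝 1) := by
    simpa using ((hlumpy.pow 2).div_const (ε ^ 2)).const_sub 1
  exact tendsto_of_tendsto_of_tendsto_of_le_of_le' hlower tendsto_const_nhds
    (hbounds.mono fun _ h => h.1) (hbounds.mono fun _ h => h.2)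

/-- If the size distribution is "lumpy" (`μ₁(x) → ∞` and
`σ(x)/μ₁(x) → 0` as `x → ρ⁻`), then for every `ε > 0` the Boltzmann(`x`)
probability that the sampled structure has size in
`[(1−ε)·μ₁(x), (1+ε)·μ₁(x)]` tends to `1` as `x → ρ⁻`. -/
theorem lumpy_concentration
    (C : Type*) [Countable C] (size : C → ℕ)
    (hfin : ∀ n : ℕ, {γ : C | size γ = n}.Finite)
    (c : ℕ → ℕ) (hc : ∀ n, c n = Nat.card {γ : C // size γ = n})
    (ρ : ℝ) (hρ : 0 < ρ)
    (hrad : ∀ y : ℝ, 0 ≤ y → y < ρ → Summable fun n : ℕ => (c n : ℝ) * y ^ n)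
    (f : ℝ → ℝ) (hf : ∀ y : ℝ, f y = ∑' n : ℕ, (c n : ℝ) * y ^ n)
    (hpos : ∀ y ∈ Set.Ioo (0 : ℝ) ρ, 0 < f y)
    (μ₁ μ₂ σ : ℝ → ℝ)
    (hμ₁ : ∀ y : ℝ, μ₁ y = y * deriv f y / f y)
    (hμ₂ : ∀ y : ℝ, μ₂ y = (y * deriv f y + y ^ 2 * deriv (deriv f) y) / f y)
    (hσ : ∀ y : ℝ, σ y = Real.sqrt (μ₂ y - μ₁ y ^ 2))
    (hmean : Filter.Tendsto μ₁ (nhdsWithin ρ (Set.Iio ρ)) Filter.atTop)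
    (hlumpy : Filter.Tendsto (fun y => σ y / μ₁ y) (nhdsWithin ρ (Set.Iio ρ)) (nhds 0)) :
    ∀ ε : ℝ, 0 < ε →
      Filter.Tendsto
        (fun y : ℝ => ∑' γ : C,
          Set.indicator
            {γ : C | (1 - ε) * μ₁ y ≤ (size γ : ℝ) ∧ (size γ : ℝ) ≤ (1 + ε) * μ₁ y}
            (fun γ : C => y ^ size γ / f y) γ)
        (nhdsWithin ρ (Set.Iio ρ)) (nhds 1) :=
  lumpy_concentration_general C size hfin c hc ρ hρ hrad f hf hpos μ₁ μ₂ σ hμ₁ hμ₂ hσ hmean hlumpy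
end

section
/- Let A and B be combinatorial classes with counting sequences (a_n) and (b_n), and let x_A, x_B > 0 satisfy 0 < A(x_A) < ∞ and 0 < B(x_B) < ∞. If α and β are independent, with α drawn from the ordinary Boltzmann distribution with parameter x_A on A and β from the ordinary Boltzmann distribution with parameter x_B on B, then the probability of the event {|α| = |β|} equals H(x_A x_B)/(A(x_A)·B(x_B)), where H(z) = ∑_n a_n b_n z^n is the generating function of the Hadamard product class A ⊙ B. -/
open scoped ENNReal

private def hadEquiv {A B : Type*} (sa : A → ℕ) (sb : B → ℕ) :
    {p : A × B // sa p.1 = sb p.2} ≃ Σ n : ℕ, {α : A // sa α = n} × {β : B // sb β = n} where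
  toFun p := ⟨sa p.1.1, ⟨p.1.1, rfl⟩, ⟨p.1.2, p.2.symm⟩⟩
  invFun σ := ⟨(σ.2.1.1, σ.2.2.1), by rw [σ.2.1.2, σ.2.2.2]⟩
  left_inv p := rfl
  right_inv := by
    rintro ⟨n, ⟨α, hα⟩, ⟨β, hβ⟩⟩
    subst hα
    rfl

private lemma tsum_const_finite {γ : Type*} [Finite γ] (c : ℝ≥0∞) :
    ∑' _ : γ, c = (Nat.card γ : ℝ≥0∞) * c := by
  cases nonempty_fintype γ
  rw [tsum_fintype, Finset.sum_const, Nat.card_eq_fintype_card, Finset.card_univ, nsmul_eq_mul]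

/-- If `α` and `β` are independent Boltzmann samples with parameters
`xA` on `A` and `xB` on `B`, then `P(|α| = |β|) = H(xA * xB) / (A(xA) * B(xB))`,
where `H(z) = ∑ a n * b n * z ^ n` is the generating function of the Hadamard
product class. -/
theorem hadamard_equal_size_probability
    (A B : Type*) [Countable A] [Countable B]
    (sa : A → ℕ) (sb : B → ℕ)
    (hfa : ∀ n : ℕ, {α : A | sa α = n}.Finite)
    (hfb : ∀ n : ℕ, {β : B | sb β = n}.Finite)
    (a b : ℕ → ℕ)
    (ha : ∀ n, a n = Nat.card {α : A // sa α = n})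
    (hb : ∀ n, b n = Nat.card {β : B // sb β = n})
    (xA xB : ℝ) (hxA : 0 < xA) (hxB : 0 < xB)
    (AX BX : ℝ)
    (hAX : HasSum (fun α : A => xA ^ sa α) AX) (hAXpos : 0 < AX)
    (hBX : HasSum (fun β : B => xB ^ sb β) BX) (hBXpos : 0 < BX) :
    ∑' p : A × B,
        (if sa p.1 = sb p.2 then (xA ^ sa p.1 / AX) * (xB ^ sb p.2 / BX) else 0)
      = (∑' n : ℕ, (a n : ℝ) * (b n : ℝ) * (xA * xB) ^ n) / (AX * BX) := by
  set g : A × B → ℝ := fun p => if sa p.1 = sb p.2 then xA ^ sa p.1 * xB ^ sb p.2 else 0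
    with hg
  have hgnn : ∀ p, 0 ≤ g p := by
    intro p
    simp only [hg]
    split
    · positivity
    · exact le_rfl
  -- rewrite LHS
  have hstep : (fun p : A × B =>
      if sa p.1 = sb p.2 then (xA ^ sa p.1 / AX) * (xB ^ sb p.2 / BX) else 0)
      = fun p => g p * (AX * BX)⁻¹ := by
    funext p
    simp only [hg]
    split
    · field_simp
    · simp
  rw [hstep, tsum_mul_right]
  rw [div_eq_mul_inv]
  congr 1
  -- main equality in ℝ via ℝ≥0∞
  have key : ∑' p : A × B, ENNReal.ofReal (g p)
      = ∑' n : ℕ, ENNReal.ofReal ((a n : ℝ) * (b n : ℝ) * (xA * xB) ^ n) := by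
    have h1 : ∑' p : A × B, ENNReal.ofReal (g p)
        = ∑' p : {p : A × B // sa p.1 = sb p.2}, ENNReal.ofReal (g p) := by
      refine (tsum_subtype_eq_of_support_subset ?_).symm
      intro p hp
      simp only [Function.mem_support] at hp
      show sa p.1 = sb p.2
      by_contra hc
      apply hp
      simp only [hg]
      rw [if_neg hc, ENNReal.ofReal_zero]
    rw [h1]
    rw [← (hadEquiv sa sb).symm.tsum_eq fun p : {p : A × B // sa p.1 = sb p.2} => ENNReal.ofReal (g p)]
    have h2 : ∀ σ : Σ n : ℕ, {α : A // sa α = n} × {β : B // sb β = n},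
        ENNReal.ofReal (g ((hadEquiv sa sb).symm σ))
        = ENNReal.ofReal ((xA * xB) ^ σ.1) := by
      rintro ⟨n, ⟨α, hα⟩, ⟨β, hβ⟩⟩
      simp only [hg, hadEquiv, Equiv.coe_fn_symm_mk]
      rw [if_pos (by rw [hα, hβ])]
      rw [hα, hβ, mul_pow]
    calc ∑' σ : Σ n : ℕ, {α : A // sa α = n} × {β : B // sb β = n},
          ENNReal.ofReal (g ((hadEquiv sa sb).symm σ))
        = ∑' σ : Σ n : ℕ, {α : A // sa α = n} × {β : B // sb β = n},
          ENNReal.ofReal ((xA * xB) ^ σ.1) := tsum_congr h2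
      _ = ∑' (n : ℕ) (_ : {α : A // sa α = n} × {β : B // sb β = n}),
          ENNReal.ofReal ((xA * xB) ^ n) := ENNReal.tsum_sigma' _
      _ = ∑' n : ℕ, ENNReal.ofReal ((a n : ℝ) * (b n : ℝ) * (xA * xB) ^ n) := by
          refine tsum_congr fun n => ?_
          have : Finite {α : A // sa α = n} := (hfa n).to_subtype
          have : Finite {β : B // sb β = n} := (hfb n).to_subtype
          rw [tsum_const_finite, Nat.card_prod, ha n, hb n]
          rw [ENNReal.ofReal_mul (by positivity), ENNReal.ofReal_mul (by positivity),
            ENNReal.ofReal_natCast, ENNReal.ofReal_natCast]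
          push_cast
          ring
  have hL : ∑' p : A × B, g p = (∑' p : A × B, ENNReal.ofReal (g p)).toReal := by
    rw [ENNReal.tsum_toReal_eq fun p => ENNReal.ofReal_ne_top]
    exact tsum_congr fun p => (ENNReal.toReal_ofReal (hgnn p)).symm
  have hR : ∑' n : ℕ, (a n : ℝ) * (b n : ℝ) * (xA * xB) ^ n
      = (∑' n : ℕ, ENNReal.ofReal ((a n : ℝ) * (b n : ℝ) * (xA * xB) ^ n)).toReal := by
    rw [ENNReal.tsum_toReal_eq fun n => ENNReal.ofReal_ne_top]
    exact tsum_congr fun n => (ENNReal.toReal_ofReal (by positivity)).symm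
  rw [hL, hR, key]
end

section
/- Let A and B be combinatorial classes and x_A, x_B > 0 with 0 < A(x_A) < ∞, 0 < B(x_B) < ∞, and H(x_A x_B) > 0, where H(z) = ∑_n a_n b_n z^n. Let α, β be independent samples from the Boltzmann distributions with parameters x_A on A and x_B on B respectively. Then, conditioned on the event {|α| = |β|}, the pair (α, β) is distributed according to the ordinary Boltzmann distribution with parameter x = x_A·x_B on the Hadamard product class A ⊙ B: for every pair (a,b) with |a| = |b| = n, the conditional probability of (a,b) equals (x_A x_B)^n / H(x_A x_B). In particular the rejection algorithm that repeatedly draws independent pairs until the sizes agree is an exact Boltzmann sampler for A ⊙ B with parameter x_A x_B. -/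
/-!
Grouping the Boltzmann weights `x ^ |γ|` of a class by size shows that their total is the
generating function `∑ c_n x^n`. On the Hadamard product the product weight of a pair
`(α, β)` with `|α| = |β| = n` is `xA ^ n * xB ^ n = (xA * xB) ^ n`, and there are `a_n b_n` such
pairs, so the probability of `{|α| = |β|}` is `H(xA * xB) / (A(xA) B(xB))`. Dividing the
probability of a single pair by it cancels the normalisations `A(xA) B(xB)`.
-/

open Function

/-- On an infinite fibre both `Nat.card` and, by `tsum_const`, the fibre's `tsum` are junk `0`. -/
theorem hasSum_card_size_fiber_mul_pow {C : Type*} (s : C → ℕ) {x : ℝ}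
    (h : Summable fun c => x ^ s c) :
    HasSum (fun n => (Nat.card {c // s c = n} : ℝ) * x ^ n) (∑' c, x ^ s c) := by
  have hfiber (n : ℕ) : ∑' c : s ⁻¹' {n}, x ^ s c = Nat.card {c // s c = n} * x ^ n := by
    rw [tsum_congr fun c : s ⁻¹' {n} => congrArg (x ^ ·) c.2, tsum_const, nsmul_eq_mul]
    rfl
  simpa only [hfiber] using h.hasSum.tsum_fiberwise s

section Hadamard

variable {A B : Type*} (sa : A → ℕ) (sb : B → ℕ)

def hadamardProduct : Set (A × B) := {p | sa p.1 = sb p.2}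

def hadamardFiberEquiv (n : ℕ) :
    {p : hadamardProduct sa sb // sa p.1.1 = n} ≃
      {α // sa α = n} × {β // sb β = n} where
  toFun p := (⟨p.1.1.1, p.2⟩, ⟨p.1.1.2, p.1.2.symm.trans p.2⟩)
  invFun q := ⟨⟨(q.1.1, q.2.1), q.1.2.trans q.2.2.symm⟩, q.1.2⟩
  left_inv _ := rfl
  right_inv _ := rfl

theorem card_hadamard_size_fiber (n : ℕ) :
    Nat.card {p : hadamardProduct sa sb // sa p.1.1 = n} =
      Nat.card {α // sa α = n} * Nat.card {β // sb β = n} := by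
  rw [Nat.card_congr (hadamardFiberEquiv sa sb n), Nat.card_prod]

theorem hasSum_hadamard_weight {xA xB : ℝ} (hxA : 0 ≤ xA) (hxB : 0 ≤ xB)
    (hA : Summable fun α => xA ^ sa α) (hB : Summable fun β => xB ^ sb β) :
    HasSum (fun p : A × B => if sa p.1 = sb p.2 then xA ^ sa p.1 * xB ^ sb p.2 else 0)
      (∑' n, (Nat.card {α // sa α = n} : ℝ) * Nat.card {β // sb β = n} * (xA * xB) ^ n) := by
  have hweight (d : hadamardProduct sa sb) :
      xA ^ sa d.1.1 * xB ^ sb d.1.2 = (xA * xB) ^ sa d.1.1 := by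
    have hd : sa d.1.1 = sb d.1.2 := d.2
    rw [hd, mul_pow]
  have hsummable : Summable fun d : hadamardProduct sa sb => (xA * xB) ^ sa d.1.1 := by
    simp only [← hweight]
    exact (hA.mul_of_nonneg hB (fun _ => by positivity) fun _ => by positivity).subtype _
  have hfibers := hasSum_card_size_fiber_mul_pow (fun d : hadamardProduct sa sb => sa d.1.1)
    hsummable
  simp only [card_hadamard_size_fiber, Nat.cast_mul] at hfibers
  have hindicator :
      (fun p : A × B => if sa p.1 = sb p.2 then xA ^ sa p.1 * xB ^ sb p.2 else 0) =
        (hadamardProduct sa sb).indicator fun p => xA ^ sa p.1 * xB ^ sb p.2 := by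
    funext p
    simp only [Set.indicator_apply, hadamardProduct, Set.mem_ofPred_eq]
  rw [hindicator, ← hasSum_subtype_iff_indicator, hfibers.tsum_eq]
  simpa only [comp_def, hweight] using hsummable.hasSum

end Hadamard

theorem hadamard_rejection_is_boltzmann_general
    (A B : Type*)
    (sa : A → ℕ) (sb : B → ℕ)
    (a b : ℕ → ℕ)
    (ha : ∀ n, a n = Nat.card {α : A // sa α = n})
    (hb : ∀ n, b n = Nat.card {β : B // sb β = n})
    (xA xB : ℝ) (hxA : 0 < xA) (hxB : 0 < xB)
    (AX BX : ℝ)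
    (hAX : HasSum (fun α : A => xA ^ sa α) AX) (hAXpos : 0 < AX)
    (hBX : HasSum (fun β : B => xB ^ sb β) BX) (hBXpos : 0 < BX) :
    ∀ (α : A) (β : B) (n : ℕ), sa α = n → sb β = n →
      ((xA ^ sa α / AX) * (xB ^ sb β / BX)) /
          (∑' p : A × B,
            if sa p.1 = sb p.2 then (xA ^ sa p.1 / AX) * (xB ^ sb p.2 / BX) else 0)
        = (xA * xB) ^ n / (∑' n : ℕ, (a n : ℝ) * (b n : ℝ) * (xA * xB) ^ n) := by
  intro α β n hα hβ
  have hH := hasSum_hadamard_weight sa sb hxA.le hxB.le hAX.summable hBX.summable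
  simp only [← ha, ← hb] at hH
  have hden : (∑' p : A × B,
      if sa p.1 = sb p.2 then (xA ^ sa p.1 / AX) * (xB ^ sb p.2 / BX) else 0) =
        (∑' n : ℕ, (a n : ℝ) * (b n : ℝ) * (xA * xB) ^ n) / (AX * BX) := by
    rw [← hH.tsum_eq, ← tsum_div_const]
    congr 1 with p
    split_ifs <;> simp [div_mul_div_comm]
  rw [hden, hα, hβ, div_mul_div_comm, ← mul_pow,
    div_div_div_cancel_right₀ (mul_pos hAXpos hBXpos).ne']

/-- Conditioned on the event `{|α| = |β|}`, a pair of independent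
Boltzmann samples (parameters `xA` on `A`, `xB` on `B`) is distributed according
to the Boltzmann distribution with parameter `xA * xB` on the Hadamard product
class `A ⊙ B`: for every pair `(a, b)` with `|a| = |b| = n`, the conditional
probability equals `(xA * xB) ^ n / H(xA * xB)`. Hence the rejection algorithm is
an exact Boltzmann sampler for `A ⊙ B` with parameter `xA * xB`. -/
theorem hadamard_rejection_is_boltzmann
    (A B : Type*) [Countable A] [Countable B]
    (sa : A → ℕ) (sb : B → ℕ)
    (hfa : ∀ n : ℕ, {α : A | sa α = n}.Finite)
    (hfb : ∀ n : ℕ, {β : B | sb β = n}.Finite)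
    (a b : ℕ → ℕ)
    (ha : ∀ n, a n = Nat.card {α : A // sa α = n})
    (hb : ∀ n, b n = Nat.card {β : B // sb β = n})
    (xA xB : ℝ) (hxA : 0 < xA) (hxB : 0 < xB)
    (AX BX : ℝ)
    (hAX : HasSum (fun α : A => xA ^ sa α) AX) (hAXpos : 0 < AX)
    (hBX : HasSum (fun β : B => xB ^ sb β) BX) (hBXpos : 0 < BX)
    (hH : 0 < ∑' n : ℕ, (a n : ℝ) * (b n : ℝ) * (xA * xB) ^ n) :
    ∀ (α : A) (β : B) (n : ℕ), sa α = n → sb β = n →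
      ((xA ^ sa α / AX) * (xB ^ sb β / BX)) /
          (∑' p : A × B,
            if sa p.1 = sb p.2 then (xA ^ sa p.1 / AX) * (xB ^ sb p.2 / BX) else 0)
        = (xA * xB) ^ n / (∑' n : ℕ, (a n : ℝ) * (b n : ℝ) * (xA * xB) ^ n) :=
  hadamard_rejection_is_boltzmann_general A B sa sb a b ha hb xA xB hxA hxB AX BX hAX hAXpos hBX
    hBXpos
end

section
/- Let (a_n)_{n≥0} be a sequence of natural numbers with a_0 = 0, and define, for each n ≥ 0, c_n = ∑_P ∏_{B ∈ P} a_{|B|}, where the sum ranges over all partitions P of the finite set {1,…,n} into nonempty blocks (c_0 = 1, corresponding to the empty partition). Then, as an identity of formal power series over ℚ (equivalently ℝ), the exponential generating functions satisfy ∑_{n≥0} c_n X^n/n! = exp(∑_{n≥1} a_n X^n/n!). That is, the exponential generating function of the class of sets of labelled A-structures is the exponential of the exponential generating function of A. -/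
/-!
With `F = ∑ aₘ Xᵐ/m!`, the number `n! · [Xⁿ] F ^ k` is the sum, over all colourings
`g : {1,…,n} → {1,…,k}`, of `∏ᵢ a_{|g⁻¹(i)|}`: this follows by induction on `k`, since splitting off
the last colour class `S` turns the product of exponential generating functions into the binomial
convolution `∑_S a_{|S|} · (k-colourings of Sᶜ)`. As `a₀ = 0`, only surjective colourings
contribute, and a surjective colouring is the same as the partition into its fibres together with
a bijection from the blocks to the colours. Hence `n! · [Xⁿ] F ^ k / k!` is the sum over the
partitions with exactly `k` blocks, and summing over `k` gives `cₙ`.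
-/

open Finset Function

section Coloring

variable {R : Type*} [CommSemiring R] (a : ℕ → R)

def coloringWeight (k : ℕ) (α : Type*) [Fintype α] [DecidableEq α] : R :=
  ∑ g : α → Fin k, ∏ i, a #{x | g x = i}

theorem coloringWeight_congr {α β : Type*} [Fintype α] [DecidableEq α] [Fintype β]
    [DecidableEq β] (e : α ≃ β) (k : ℕ) : coloringWeight a k α = coloringWeight a k β := by
  refine Fintype.sum_equiv (e.arrowCongr (Equiv.refl _)) _ _ fun g => ?_
  refine prod_congr rfl fun i _ => congrArg a (card_equiv e fun x => ?_)
  simp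

theorem coloringWeight_zero_fin (n : ℕ) :
    coloringWeight a 0 (Fin n) = if n = 0 then 1 else 0 := by
  rcases n with _ | n
  · simp [coloringWeight]
  · have : IsEmpty (Fin (n + 1) → Fin 0) := ⟨fun g => (g 0).elim0⟩
    simp [coloringWeight]

section LastColor

variable {α : Type*} [Fintype α] [DecidableEq α] {k : ℕ}

def lastColorEquiv (S : Finset α) :
    {g : α → Fin (k + 1) // ∀ x, g x = Fin.last k ↔ x ∈ S} ≃ (↥Sᶜ → Fin k) where
  toFun g y := (g.1 y).castPred ((g.2 y).not.2 (mem_compl.1 y.2))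
  invFun h := ⟨fun x => if hx : x ∈ S then Fin.last k else (h ⟨x, mem_compl.2 hx⟩).castSucc,
    fun x => by by_cases hx : x ∈ S <;> simp [hx, Fin.castSucc_ne_last]⟩
  left_inv g := by
    ext x
    by_cases hx : x ∈ S
    · simp [hx, ((g.2 x).2 hx).symm]
    · simp [hx]
  right_inv h := by
    ext y
    simp [mem_compl.1 y.2]

theorem card_fiber_lastColorEquiv {S : Finset α}
    (g : {g : α → Fin (k + 1) // ∀ x, g x = Fin.last k ↔ x ∈ S}) (i : Fin k) :
    #{y | lastColorEquiv S g y = i} = #{x | g.1 x = i.castSucc} := by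
  rw [← card_map (Embedding.subtype _)]
  congr 1
  ext x
  simp only [mem_map, mem_filter, mem_univ, true_and, Embedding.subtype_apply, lastColorEquiv,
    Equiv.coe_fn_mk, Fin.castPred_eq_iff_eq_castSucc]
  refine ⟨fun ⟨y, h, hy⟩ => hy ▸ h, fun h => ⟨⟨x, mem_compl.2 fun hx => ?_⟩, h, rfl⟩⟩
  exact Fin.castSucc_ne_last i (h ▸ (g.2 x).2 hx)

theorem prod_card_fiber_eq_mul_lastColorEquiv {S : Finset α}
    (g : {g : α → Fin (k + 1) // ∀ x, g x = Fin.last k ↔ x ∈ S}) :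
    ∏ i, a #{x | g.1 x = i} = a #S * ∏ i, a #{y | lastColorEquiv S g y = i} := by
  have hlast : ({x | g.1 x = Fin.last k} : Finset α) = S := by ext x; simp [g.2 x]
  simp only [Fin.prod_univ_castSucc, hlast, card_fiber_lastColorEquiv, mul_comm]

theorem coloringWeight_succ (k : ℕ) (α : Type*) [Fintype α] [DecidableEq α] :
    coloringWeight a (k + 1) α = ∑ S : Finset α, a #S * coloringWeight a k ↥Sᶜ := by
  rw [coloringWeight, ← sum_fiberwise univ
    (fun g : α → Fin (k + 1) => ({x | g x = Fin.last k} : Finset α))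
    fun g => ∏ i, a #{x | g x = i}]
  refine sum_congr rfl fun S _ => ?_
  rw [sum_subtype (p := fun g => ∀ x, g x = Fin.last k ↔ x ∈ S) _
    (fun g => by simp [Finset.ext_iff]) fun g : α → Fin (k + 1) => ∏ i, a #{x | g x = i},
    coloringWeight, mul_sum, ← (lastColorEquiv S).sum_comp]
  exact sum_congr rfl fun g _ => prod_card_fiber_eq_mul_lastColorEquiv a g

end LastColor

theorem coloringWeight_succ_fin (k n : ℕ) :
    coloringWeight a (k + 1) (Fin n) =
      ∑ q ∈ range (n + 1), n.choose q * (a q * coloringWeight a k (Fin (n - q))) := by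
  have hcompl (S : Finset (Fin n)) :
      coloringWeight a k ↥Sᶜ = coloringWeight a k (Fin (n - #S)) := by
    rw [coloringWeight_congr a (Sᶜ.equivFin) k, card_compl, Fintype.card_fin]
  simp_rw [coloringWeight_succ, hcompl, ← powerset_univ]
  rw [sum_powerset_apply_card (fun q => a q * coloringWeight a k (Fin (n - q)))]
  simp [nsmul_eq_mul]

end Coloring

theorem coeff_pow_mk_div_factorial {K : Type*} [Field K] [CharZero K] (a : ℕ → K)
    (k n : ℕ) :
    PowerSeries.coeff n ((PowerSeries.mk fun m => a m / m.factorial) ^ k) =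
      coloringWeight a k (Fin n) / n.factorial := by
  induction k generalizing n with
  | zero =>
    rw [pow_zero, PowerSeries.coeff_one, coloringWeight_zero_fin]
    split_ifs with hn <;> simp [hn]
  | succ k ih =>
    rw [pow_succ', PowerSeries.coeff_mul, Nat.sum_antidiagonal_eq_sum_range_succ
      (fun i j => PowerSeries.coeff i _ * PowerSeries.coeff j _), coloringWeight_succ_fin,
      sum_div]
    refine sum_congr rfl fun q hq => ?_
    have hqn : q ≤ n := Nat.lt_succ_iff.mp (mem_range.mp hq)
    rw [ih, PowerSeries.coeff_mk, Nat.cast_choose K hqn]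
    field_simp
    rw [mul_div_mul_right _ _ (Nat.cast_ne_zero.2 n.factorial_ne_zero)]

theorem Finpartition.eq_of_part_eq {α : Type*} [DecidableEq α] {s : Finset α}
    {P Q : Finpartition s} (h : ∀ x ∈ s, P.part x = Q.part x) : P = Q := by
  ext B
  refine ⟨fun hB => ?_, fun hB => ?_⟩
  · obtain ⟨x, hx, rfl⟩ := P.part_surjOn hB
    exact h x hx ▸ Q.part_mem.2 hx
  · obtain ⟨x, hx, rfl⟩ := Q.part_surjOn hB
    exact (h x hx).symm ▸ P.part_mem.2 hx

theorem Fintype.card_equiv_eq_ite {α β : Type*} [Fintype α] [DecidableEq α] [Fintype β]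
    [DecidableEq β] :
    Fintype.card (α ≃ β) = if card α = card β then (card α).factorial else 0 := by
  split_ifs with h
  · exact Fintype.card_equiv (Fintype.equivOfCardEq h)
  · exact Fintype.card_eq_zero_iff.2 ⟨fun e => h (Fintype.card_congr e)⟩

section KernelPartition

variable {α ι : Type*} [Fintype α] [DecidableEq α]

def Finpartition.colorParts (P : Finpartition (univ : Finset α)) (e : P.parts ≃ ι) (x : α) :
    ι :=
  e ⟨P.part x, P.part_mem.2 (mem_univ x)⟩

theorem Finpartition.colorParts_injective (P : Finpartition (univ : Finset α)) :
    Injective (P.colorParts (ι := ι)) := by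
  intro e e' h
  refine Equiv.ext fun B => ?_
  obtain ⟨x, hx⟩ := P.nonempty_of_mem_parts B.2
  have hB : (⟨P.part x, P.part_mem.2 (mem_univ x)⟩ : P.parts) = B :=
    Subtype.ext (P.part_eq_of_mem B.2 hx)
  simpa [colorParts, hB] using congrFun h x

variable [DecidableEq ι]

instance Setoid.decidableRelKer (g : α → ι) : DecidableRel (Setoid.ker g).r :=
  fun _ _ => decidable_of_iff _ Setoid.ker_def.symm

def kerPartition (g : α → ι) : Finpartition (univ : Finset α) :=
  Finpartition.ofSetoid (Setoid.ker g)

theorem part_kerPartition (g : α → ι) (x : α) :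
    (kerPartition g).part x = ({y | g y = g x} : Finset α) := by
  ext y
  simp [kerPartition, Finpartition.mem_part_ofSetoid_iff_rel, Setoid.ker_def, eq_comm]

namespace Finpartition

variable (P : Finpartition (univ : Finset α))

theorem fiber_colorParts (e : P.parts ≃ ι) (i : ι) :
    ({x | P.colorParts e x = i} : Finset α) = (e.symm i).1 := by
  ext x
  simp [colorParts, ← Equiv.eq_symm_apply, Subtype.ext_iff, P.part_eq_iff_mem (e.symm i).2]

theorem surjective_colorParts (e : P.parts ≃ ι) : Surjective (P.colorParts e) := by
  intro i
  obtain ⟨x, hx⟩ := P.nonempty_of_mem_parts (e.symm i).2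
  rw [← fiber_colorParts] at hx
  exact ⟨x, (mem_filter.1 hx).2⟩

theorem kerPartition_colorParts (e : P.parts ≃ ι) : kerPartition (P.colorParts e) = P := by
  refine eq_of_part_eq fun x _ => ?_
  rw [part_kerPartition, fiber_colorParts]
  simp [colorParts]

theorem prod_card_fiber_colorParts {R : Type*} [CommMonoid R] [Fintype ι] (a : ℕ → R)
    (e : P.parts ≃ ι) : ∏ i, a #{x | P.colorParts e x = i} = ∏ B ∈ P.parts, a #B := by
  simp only [fiber_colorParts]
  exact (e.symm.prod_comp fun B : P.parts => a #B.1).trans (prod_coe_sort P.parts fun B => a #B)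

end Finpartition

theorem exists_colorParts_eq {g : α → ι} (hg : Surjective g) :
    ∃ e, (kerPartition g).colorParts e = g := by
  set P := kerPartition g
  have hmem (i : ι) : ({x | g x = i} : Finset α) ∈ P.parts := by
    obtain ⟨x, rfl⟩ := hg i
    exact part_kerPartition g x ▸ P.part_mem.2 (mem_univ x)
  have hbij : Bijective fun i => (⟨({x | g x = i} : Finset α), hmem i⟩ : P.parts) := by
    refine ⟨fun i j hij => ?_, fun B => ?_⟩
    · obtain ⟨x, rfl⟩ := hg i
      have hfib : ({y | g y = g x} : Finset α) = ({y | g y = j} : Finset α) :=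
        congrArg Subtype.val hij
      have hx : x ∈ ({y | g y = j} : Finset α) := hfib ▸ by simp
      simpa using hx
    · obtain ⟨x, -, hx⟩ := P.part_surjOn B.2
      exact ⟨g x, Subtype.ext (by rw [← hx]; exact (part_kerPartition g x).symm)⟩
  refine ⟨(Equiv.ofBijective _ hbij).symm, funext fun x => ?_⟩
  simp [Finpartition.colorParts, P, part_kerPartition]

end KernelPartition

section Partitions

variable {R : Type*} [CommSemiring R] (a : ℕ → R)
variable {α ι : Type*} [Fintype α] [DecidableEq α] [Fintype ι] [DecidableEq ι]

theorem coloringWeight_eq_sum_surjective (ha0 : a 0 = 0) (k : ℕ) :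
    coloringWeight a k α = ∑ g : α → Fin k with Surjective g, ∏ i, a #{x | g x = i} := by
  rw [coloringWeight, sum_filter_of_ne]
  intro g _ hw
  by_contra hg
  obtain ⟨i, hi⟩ := not_forall.1 hg
  refine hw (prod_eq_zero (mem_univ i) ?_)
  rw [filter_false_of_mem fun x _ hx => hi ⟨x, hx⟩, card_empty, ha0]

theorem sum_surjective_kerPartition_eq (P : Finpartition (univ : Finset α)) :
    ∑ g : α → ι with Surjective g ∧ kerPartition g = P, ∏ i, a #{x | g x = i} =
      Fintype.card (P.parts ≃ ι) * ∏ B ∈ P.parts, a #B := by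
  calc _ = ∑ _e : P.parts ≃ ι, ∏ B ∈ P.parts, a #B := by
        refine (sum_bij (fun e _ => P.colorParts e) (fun e _ => ?_)
          (fun e _ e' _ h => P.colorParts_injective h) (fun g hg => ?_)
          (fun e _ => (P.prod_card_fiber_colorParts a e).symm)).symm
        · simp [P.surjective_colorParts, P.kerPartition_colorParts]
        · obtain ⟨hsurj, rfl⟩ := (mem_filter.1 hg).2
          obtain ⟨e, he⟩ := exists_colorParts_eq hsurj
          exact ⟨e, mem_univ e, he⟩
    _ = _ := by rw [sum_const, card_univ, nsmul_eq_mul]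

theorem coloringWeight_eq_factorial_mul_sum_partitions (ha0 : a 0 = 0) (k : ℕ) :
    coloringWeight a k α = k.factorial *
      ∑ P : Finpartition (univ : Finset α) with #P.parts = k, ∏ B ∈ P.parts, a #B := by
  rw [coloringWeight_eq_sum_surjective a ha0, ← sum_fiberwise _ kerPartition, sum_filter, mul_sum]
  refine sum_congr rfl fun P _ => ?_
  rw [filter_filter, sum_surjective_kerPartition_eq, Fintype.card_equiv_eq_ite, Fintype.card_coe,
    Fintype.card_fin]
  split_ifs with h <;> simp [h]

end Partitions

/-- Exponential formula. Let `a : ℕ → ℕ` with `a 0 = 0`, and let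
`c n = ∑_P ∏_{B ∈ P} a |B|`, the sum over all partitions `P` of `{1, …, n}` into
nonempty blocks (`c 0 = 1`, the empty partition). Then the exponential generating
functions satisfy `∑ c n X^n/n! = exp (∑ a n X^n/n!)` as formal power series over
`ℚ`; since `F = ∑ a n X^n/n!` has zero constant term, `exp F = ∑_k F^k/k!` is
expressed coefficientwise: the `n`-th coefficient of `exp F` is
`∑_{k ≤ n} (coeff n (F^k)) / k!`. -/
theorem set_construction_egf_is_exp_of_egf
    (a : ℕ → ℕ) (ha0 : a 0 = 0)
    (c : ℕ → ℕ)
    (hc : ∀ n : ℕ, c n =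
      ∑ P : Finpartition (Finset.univ : Finset (Fin n)), ∏ B ∈ P.parts, a B.card) :
    ∀ n : ℕ, (c n : ℚ) / n.factorial
      = ∑ k ∈ Finset.range (n + 1),
          (PowerSeries.coeff (R := ℚ) n
            ((PowerSeries.mk fun m : ℕ => (a m : ℚ) / m.factorial) ^ k))
            / k.factorial := by
  intro n
  have hk (k : ℕ) : PowerSeries.coeff n ((PowerSeries.mk fun m => (a m : ℚ) / m.factorial) ^ k)
        / k.factorial =
      (∑ P : Finpartition (univ : Finset (Fin n)) with #P.parts = k, ∏ B ∈ P.parts, (a #B : ℚ))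
        / n.factorial := by
    rw [coeff_pow_mk_div_factorial (fun m => (a m : ℚ)),
      coloringWeight_eq_factorial_mul_sum_partitions _ (by simp [ha0])]
    field_simp
  rw [sum_congr rfl fun k _ => hk k, ← sum_div, hc n, Nat.cast_sum]
  simp_rw [Nat.cast_prod]
  rw [sum_fiberwise_of_maps_to fun P _ => mem_range.2 (Nat.lt_succ_of_le ?_)]
  simpa using P.card_parts_le_card
end
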